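/- For complex numbers z₁,…,z_k, the difference between |∑ z_j|^α (∑ z_j) and ∑ |z_j|^α z_j is bounded, up to a constant depending on k and α, as follows: if 0 < α ≤ 1 it is bounded by ∑_{j≠j'} |z_j| |z_{j'}|^α, and if α > 1 it is bounded by ∑_{j≠j'} |z_j| |z_{j'}| (|z_j| + |z_{j'}|)^{α-1}. -/

import Mathlib

open MeasureTheory Real Filter Topology

noncomputable section

/-- Euclidean space ℝ^d. -/
abbrev Ed (d : ℕ) := EuclideanSpace ℝ (Fin d)

/-- `‖∇u‖₂²`, the squared L² norm of the gradient. -/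
def gradSq (d : ℕ) (u : Ed d → ℂ) : ℝ := ∫ x, ‖fderiv ℝ u x‖ ^ 2

/-- `‖u‖_p^p`, the p-th power of the Lᵖ norm. -/
def lpPow (d : ℕ) (p : ℝ) (u : Ed d → ℂ) : ℝ := ∫ x, ‖u x‖ ^ p

/-- membership in H¹(ℝ^d): u and its gradient are in L². -/
def InH1 (d : ℕ) (u : Ed d → ℂ) : Prop :=
  MemLp u 2 (volume : Measure (Ed d)) ∧
  MemLp (fun x => fderiv ℝ u x) 2 (volume : Measure (Ed d))

/-- the mass-critical exponent 2 + 4/d. -/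
def massExp (d : ℕ) : ℝ := 2 + 4 / (d : ℝ)

/-- the energy-critical exponent 2* = 2d/(d-2). -/
def energyExp (d : ℕ) : ℝ := 2 * (d : ℝ) / ((d : ℝ) - 2)

/-- focusing-focusing energy. -/
def Hff (d : ℕ) (u : Ed d → ℂ) : ℝ :=
  (1 / 2) * gradSq d u - (1 / massExp d) * lpPow d (massExp d) u
    - (((d : ℝ) - 2) / (2 * (d : ℝ))) * lpPow d (energyExp d) u

/-- focusing-focusing virial. -/
def Kff (d : ℕ) (u : Ed d → ℂ) : ℝ :=
  gradSq d u - ((d : ℝ) / ((d : ℝ) + 2)) * lpPow d (massExp d) u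
    - lpPow d (energyExp d) u

/-- defocusing(mass)-focusing(energy) energy. -/
def Hdf (d : ℕ) (u : Ed d → ℂ) : ℝ :=
  (1 / 2) * gradSq d u + (1 / massExp d) * lpPow d (massExp d) u
    - (((d : ℝ) - 2) / (2 * (d : ℝ))) * lpPow d (energyExp d) u

/-- defocusing(mass)-focusing(energy) virial. -/
def Kdf (d : ℕ) (u : Ed d → ℂ) : ℝ :=
  gradSq d u + ((d : ℝ) / ((d : ℝ) + 2)) * lpPow d (massExp d) u
    - lpPow d (energyExp d) u

/-- focusing(mass)-defocusing(energy) energy. -/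
def Hfd (d : ℕ) (u : Ed d → ℂ) : ℝ :=
  (1 / 2) * gradSq d u - (1 / massExp d) * lpPow d (massExp d) u
    + (((d : ℝ) - 2) / (2 * (d : ℝ))) * lpPow d (energyExp d) u

/-- the mass-preserving scaling T_λ u(x) = λ^{d/2} u(λ x). -/
def Tscale (d : ℕ) (lam : ℝ) (u : Ed d → ℂ) : Ed d → ℂ :=
  fun x => ((lam ^ ((d : ℝ) / 2) : ℝ) : ℂ) * u (lam • x)

/-- the Ḣ¹-preserving scaling U_λ u(x) = λ^{(d-2)/2} u(λ x). -/
def Uscale (d : ℕ) (lam : ℝ) (u : Ed d → ℂ) : Ed d → ℂ :=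
  fun x => ((lam ^ (((d : ℝ) - 2) / 2) : ℝ) : ℂ) * u (lam • x)


section AuxStmt0

variable {α : ℝ}

/-- x^α = x * x^(α-1) for x ≥ 0, α ≠ 0. -/
private lemma rpow_split (hα : 0 < α) {x : ℝ} (hx : 0 ≤ x) : x ^ α = x * x ^ (α - 1) := by
  rcases eq_or_lt_of_le hx with h | h
  · rw [← h, Real.zero_rpow (ne_of_gt hα), zero_mul]
  · have := Real.rpow_add_one (ne_of_gt h) (α - 1)
    rw [sub_add_cancel] at this
    rw [this]; ring

private lemma scalar_le_one (hα : 0 < α) (hα1 : α ≤ 1) {s r : ℝ} (hs : 0 ≤ s) (hsr : s ≤ r) :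
    r ^ α - s ^ α ≤ (r - s) * r ^ (α - 1) := by
  rcases eq_or_lt_of_le (hs.trans hsr) with hr | hr
  · have hs0 : s = 0 := le_antisymm (hsr.trans_eq hr.symm) hs
    simp [← hr, hs0, Real.zero_rpow (ne_of_gt hα)]
  · have key : s * r ^ (α - 1) ≤ s ^ α := by
      rcases eq_or_lt_of_le hs with hs0 | hs0
      · simp [← hs0, Real.zero_rpow (ne_of_gt hα)]
      · have h1 : r ^ (α - 1) ≤ s ^ (α - 1) :=
          Real.rpow_le_rpow_of_nonpos hs0 hsr (by linarith)
        calc s * r ^ (α - 1) ≤ s * s ^ (α - 1) :=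
              mul_le_mul_of_nonneg_left h1 hs
          _ = s ^ α := (rpow_split hα hs).symm
    have hrα : r ^ α = r * r ^ (α - 1) := rpow_split hα hr.le
    nlinarith [key, hrα]

private lemma scalar_ge_one (hα1 : 1 ≤ α) {s r : ℝ} (hs : 0 ≤ s) (hsr : s ≤ r) :
    r ^ α - s ^ α ≤ α * ((r - s) * r ^ (α - 1)) := by
  have hα : 0 < α := lt_of_lt_of_le one_pos hα1
  rcases eq_or_lt_of_le (hs.trans hsr) with hr | hr
  · have hs0 : s = 0 := le_antisymm (hsr.trans_eq hr.symm) hs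
    simp [← hr, hs0, Real.zero_rpow (ne_of_gt hα)]
  · have ht0 : (0:ℝ) ≤ s / r := div_nonneg hs hr.le
    have hB := one_add_mul_self_le_rpow_one_add (s := s / r - 1) (by linarith) hα1
    rw [add_sub_cancel] at hB
    -- hB : 1 + α * (s / r - 1) ≤ (s / r) ^ α
    have hdiv : (s / r) ^ α = s ^ α / r ^ α := Real.div_rpow hs hr.le α
    have hrpos : (0:ℝ) < r ^ α := Real.rpow_pos_of_pos hr α
    have hmul := mul_le_mul_of_nonneg_right hB hrpos.le
    rw [hdiv, div_mul_cancel₀ _ (ne_of_gt hrpos)] at hmul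
    -- hmul : (1 + α * (s / r - 1)) * r ^ α ≤ s ^ α
    have hrα : r ^ α = r * r ^ (α - 1) := rpow_split hα hr.le
    have hsr' : s / r * r ^ α = s * r ^ (α - 1) := by
      rw [hrα]; field_simp
    nlinarith [hmul, hrα, hsr']

/-- combined scalar estimate: |s^α - r^α| ≤ M |s-r| r^(α-1) for 0 ≤ s ≤ 2r. -/
private lemma scalarC (hα : 0 < α) {s r : ℝ} (hr : 0 < r) (hs : 0 ≤ s) (hs2 : s ≤ 2 * r) :
    |s ^ α - r ^ α| ≤ (max α 1 * 2 ^ α) * (|s - r| * r ^ (α - 1)) := by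
  have h2α : (1:ℝ) ≤ 2 ^ α := by
    calc (1:ℝ) = 2 ^ (0:ℝ) := (Real.rpow_zero 2).symm
    _ ≤ 2 ^ α := Real.rpow_le_rpow_of_exponent_le (by norm_num) hα.le
  have hM1 : (1:ℝ) ≤ max α 1 * 2 ^ α := by nlinarith [le_max_right α 1]
  have hrne : r ^ (α - 1) ≥ 0 := Real.rpow_nonneg hr.le _
  rcases le_total s r with hsr | hsr
  · have habs1 : |s ^ α - r ^ α| = r ^ α - s ^ α := by
      rw [abs_sub_comm, abs_of_nonneg (sub_nonneg.2 (Real.rpow_le_rpow hs hsr hα.le))]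
    have habs2 : |s - r| = r - s := by
      rw [abs_sub_comm, abs_of_nonneg (sub_nonneg.2 hsr)]
    rw [habs1, habs2]
    rcases le_total α 1 with h1 | h1
    · calc r ^ α - s ^ α ≤ (r - s) * r ^ (α - 1) := scalar_le_one hα h1 hs hsr
        _ ≤ (max α 1 * 2 ^ α) * ((r - s) * r ^ (α - 1)) := by
            nlinarith [mul_nonneg (sub_nonneg.2 hsr) hrne]
    · calc r ^ α - s ^ α ≤ α * ((r - s) * r ^ (α - 1)) := scalar_ge_one h1 hs hsr
        _ ≤ (max α 1 * 2 ^ α) * ((r - s) * r ^ (α - 1)) := by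
            have : α ≤ max α 1 * 2 ^ α := by
              nlinarith [le_max_left α 1, lt_of_lt_of_le one_pos (le_max_right α 1)]
            nlinarith [mul_nonneg (sub_nonneg.2 hsr) hrne]
  · have hspos : 0 < s := lt_of_lt_of_le hr hsr
    have habs1 : |s ^ α - r ^ α| = s ^ α - r ^ α :=
      abs_of_nonneg (sub_nonneg.2 (Real.rpow_le_rpow hr.le hsr hα.le))
    have habs2 : |s - r| = s - r := abs_of_nonneg (sub_nonneg.2 hsr)
    rw [habs1, habs2]
    rcases le_total α 1 with h1 | h1
    · have h0 := scalar_le_one hα h1 hr.le hsr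
      -- s^α - r^α ≤ (s - r) * s^(α-1), and s^(α-1) ≤ r^(α-1)
      have hmono : s ^ (α - 1) ≤ r ^ (α - 1) :=
        Real.rpow_le_rpow_of_nonpos hr hsr (by linarith)
      calc s ^ α - r ^ α ≤ (s - r) * s ^ (α - 1) := h0
        _ ≤ (s - r) * r ^ (α - 1) := mul_le_mul_of_nonneg_left hmono (sub_nonneg.2 hsr)
        _ ≤ (max α 1 * 2 ^ α) * ((s - r) * r ^ (α - 1)) := by
            nlinarith [mul_nonneg (sub_nonneg.2 hsr) hrne]
    · have h0 := scalar_ge_one h1 hr.le hsr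
      have hmono : s ^ (α - 1) ≤ 2 ^ α * r ^ (α - 1) := by
        calc s ^ (α - 1) ≤ (2 * r) ^ (α - 1) :=
              Real.rpow_le_rpow hspos.le hs2 (by linarith)
          _ = 2 ^ (α - 1) * r ^ (α - 1) := Real.mul_rpow (by norm_num) hr.le
          _ ≤ 2 ^ α * r ^ (α - 1) := by
              have : (2:ℝ) ^ (α - 1) ≤ 2 ^ α :=
                Real.rpow_le_rpow_of_exponent_le (by norm_num) (by linarith)
              exact mul_le_mul_of_nonneg_right this hrne
      have hαmax : α ≤ max α 1 := le_max_left α 1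
      have h2nn : (0:ℝ) ≤ 2 ^ α := by linarith
      calc s ^ α - r ^ α ≤ α * ((s - r) * s ^ (α - 1)) := h0
        _ ≤ α * ((s - r) * (2 ^ α * r ^ (α - 1))) := by
            have := mul_le_mul_of_nonneg_left hmono (sub_nonneg.2 hsr)
            exact mul_le_mul_of_nonneg_left this hα.le
        _ ≤ (max α 1 * 2 ^ α) * ((s - r) * r ^ (α - 1)) := by
            nlinarith [mul_nonneg (sub_nonneg.2 hsr) hrne,
              mul_le_mul_of_nonneg_right hαmax (mul_nonneg h2nn
                (mul_nonneg (sub_nonneg.2 hsr) hrne))]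

end AuxStmt0

section AuxStmt0b

variable {α : ℝ}

/-- the power nonlinearity F(z) = |z|^α z. -/
private noncomputable def Fp (α : ℝ) (w : ℂ) : ℂ := ((‖w‖ ^ α : ℝ) : ℂ) * w

private lemma Fp_zero (hα : 0 < α) : Fp α 0 = 0 := by simp [Fp]

private lemma norm_Fp (w : ℂ) : ‖Fp α w‖ = ‖w‖ ^ α * ‖w‖ := by
  rw [Fp, norm_mul, Complex.norm_real, Real.norm_eq_abs,
    abs_of_nonneg (Real.rpow_nonneg (norm_nonneg w) α)]

/-- difference estimate: ‖F(a+b) - F(a)‖ ≤ CK ‖b‖ ‖a‖^α when ‖b‖ ≤ ‖a‖. -/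
private lemma Fp_diff (hα : 0 < α) (a b : ℂ) (hba : ‖b‖ ≤ ‖a‖) :
    ‖Fp α (a + b) - Fp α a‖ ≤ (max α 1 * 2 ^ α + 2 ^ α) * (‖b‖ * ‖a‖ ^ α) := by
  rcases eq_or_ne a 0 with rfl | ha
  · have hb : b = 0 := by
      have hb0 : ‖b‖ ≤ 0 := by simpa using hba
      exact norm_le_zero_iff.1 hb0
    simp [hb, Fp_zero hα, Real.zero_rpow (ne_of_gt hα)]
  · set r := ‖a‖ with hrdef
    set s := ‖a + b‖ with hsdef
    have hr : 0 < r := norm_pos_iff.2 ha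
    have hs : 0 ≤ s := norm_nonneg _
    have hsr : |s - r| ≤ ‖b‖ := by
      simpa using abs_norm_sub_norm_le (a + b) a
    have hs2 : s ≤ 2 * r := by
      have := norm_add_le a b
      simp only [← hsdef, ← hrdef] at this ⊢
      linarith
    have hid : Fp α (a + b) - Fp α a
        = ((s ^ α - r ^ α : ℝ) : ℂ) * a + ((s ^ α : ℝ) : ℂ) * b := by
      simp only [Fp, ← hsdef, ← hrdef]
      push_cast
      ring
    have hnormle : ‖Fp α (a + b) - Fp α a‖ ≤ |s ^ α - r ^ α| * r + s ^ α * ‖b‖ := by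
      rw [hid]
      refine (norm_add_le _ _).trans ?_
      rw [norm_mul, norm_mul, Complex.norm_real, Complex.norm_real, Real.norm_eq_abs,
        Real.norm_eq_abs, abs_of_nonneg (Real.rpow_nonneg hs α)]
    have h1 : |s ^ α - r ^ α| * r ≤ (max α 1 * 2 ^ α) * (‖b‖ * r ^ α) := by
      have hC := scalarC hα hr hs hs2
      have hrp : (0:ℝ) ≤ r ^ (α - 1) := Real.rpow_nonneg hr.le _
      have step : |s ^ α - r ^ α| * r ≤ (max α 1 * 2 ^ α) * (‖b‖ * (r ^ (α - 1) * r)) := by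
        have h2 : |s - r| * r ^ (α - 1) ≤ ‖b‖ * r ^ (α - 1) :=
          mul_le_mul_of_nonneg_right hsr hrp
        have h3 : |s ^ α - r ^ α| ≤ (max α 1 * 2 ^ α) * (‖b‖ * r ^ (α - 1)) := by
          refine hC.trans ?_
          have hM : (0:ℝ) ≤ max α 1 * 2 ^ α := by
            have : (0:ℝ) < 2 ^ α := Real.rpow_pos_of_pos (by norm_num) α
            nlinarith [lt_of_lt_of_le one_pos (le_max_right α 1)]
          exact mul_le_mul_of_nonneg_left h2 hM
        calc |s ^ α - r ^ α| * r ≤ ((max α 1 * 2 ^ α) * (‖b‖ * r ^ (α - 1))) * r :=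
              mul_le_mul_of_nonneg_right h3 hr.le
          _ = (max α 1 * 2 ^ α) * (‖b‖ * (r ^ (α - 1) * r)) := by ring
      have hrr : r ^ (α - 1) * r = r ^ α := by
        rw [rpow_split hα hr.le]; ring
      rwa [hrr] at step
    have h2 : s ^ α * ‖b‖ ≤ 2 ^ α * (‖b‖ * r ^ α) := by
      have : s ^ α ≤ 2 ^ α * r ^ α := by
        calc s ^ α ≤ (2 * r) ^ α := Real.rpow_le_rpow hs hs2 hα.le
          _ = 2 ^ α * r ^ α := Real.mul_rpow (by norm_num) hr.le
      calc s ^ α * ‖b‖ ≤ (2 ^ α * r ^ α) * ‖b‖ :=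
            mul_le_mul_of_nonneg_right this (norm_nonneg b)
        _ = 2 ^ α * (‖b‖ * r ^ α) := by ring
    calc ‖Fp α (a + b) - Fp α a‖ ≤ |s ^ α - r ^ α| * r + s ^ α * ‖b‖ := hnormle
      _ ≤ (max α 1 * 2 ^ α) * (‖b‖ * r ^ α) + 2 ^ α * (‖b‖ * r ^ α) := add_le_add h1 h2
      _ = (max α 1 * 2 ^ α + 2 ^ α) * (‖b‖ * r ^ α) := by ring

/-- the main constant. -/
private noncomputable def C2 (α : ℝ) : ℝ := max α 1 * 2 ^ α + 2 ^ α + 1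

private lemma C2_pos (hα : 0 < α) : 0 < C2 α := by
  have h2 : (0:ℝ) < 2 ^ α := Real.rpow_pos_of_pos (by norm_num) α
  have : (0:ℝ) < max α 1 := lt_of_lt_of_le one_pos (le_max_right α 1)
  unfold C2; nlinarith

private lemma Fp_cancel_aux (hα : 0 < α) (a b : ℂ) (hba : ‖b‖ ≤ ‖a‖) :
    ‖Fp α (a + b) - Fp α a - Fp α b‖ ≤ C2 α * (‖b‖ * ‖a‖ ^ α) := by
  have h1 := Fp_diff hα a b hba
  have h2 : ‖Fp α b‖ ≤ ‖b‖ * ‖a‖ ^ α := by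
    rw [norm_Fp]
    have : ‖b‖ ^ α ≤ ‖a‖ ^ α := Real.rpow_le_rpow (norm_nonneg b) hba hα.le
    calc ‖b‖ ^ α * ‖b‖ ≤ ‖a‖ ^ α * ‖b‖ := mul_le_mul_of_nonneg_right this (norm_nonneg b)
      _ = ‖b‖ * ‖a‖ ^ α := by ring
  calc ‖Fp α (a + b) - Fp α a - Fp α b‖
      ≤ ‖Fp α (a + b) - Fp α a‖ + ‖Fp α b‖ := norm_sub_le _ _
    _ ≤ (max α 1 * 2 ^ α + 2 ^ α) * (‖b‖ * ‖a‖ ^ α) + ‖b‖ * ‖a‖ ^ α := add_le_add h1 h2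
    _ = C2 α * (‖b‖ * ‖a‖ ^ α) := by unfold C2; ring

private lemma Fp_cancel (hα : 0 < α) (a b : ℂ) :
    ‖Fp α (a + b) - Fp α a - Fp α b‖ ≤ C2 α * (‖a‖ * ‖b‖ ^ α + ‖b‖ * ‖a‖ ^ α) := by
  have hnn1 : 0 ≤ ‖a‖ * ‖b‖ ^ α := mul_nonneg (norm_nonneg a) (Real.rpow_nonneg (norm_nonneg b) α)
  have hnn2 : 0 ≤ ‖b‖ * ‖a‖ ^ α := mul_nonneg (norm_nonneg b) (Real.rpow_nonneg (norm_nonneg a) α)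
  have hC2 := (C2_pos hα).le
  rcases le_total ‖b‖ ‖a‖ with h | h
  · calc ‖Fp α (a + b) - Fp α a - Fp α b‖ ≤ C2 α * (‖b‖ * ‖a‖ ^ α) := Fp_cancel_aux hα a b h
      _ ≤ C2 α * (‖a‖ * ‖b‖ ^ α + ‖b‖ * ‖a‖ ^ α) := by nlinarith
  · have hsym : Fp α (a + b) - Fp α a - Fp α b = Fp α (b + a) - Fp α b - Fp α a := by
      rw [add_comm]; ring
    rw [hsym]
    calc ‖Fp α (b + a) - Fp α b - Fp α a‖ ≤ C2 α * (‖a‖ * ‖b‖ ^ α) := Fp_cancel_aux hα b a h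
      _ ≤ C2 α * (‖a‖ * ‖b‖ ^ α + ‖b‖ * ‖a‖ ^ α) := by nlinarith

end AuxStmt0b

section AuxStmt0c

variable {α : ℝ}

private lemma rpow_sum_le (hα : 0 < α) (hα1 : α ≤ 1) {ι : Type*} (s : Finset ι) (f : ι → ℝ)
    (hf : ∀ j, 0 ≤ f j) : (∑ j ∈ s, f j) ^ α ≤ ∑ j ∈ s, f j ^ α := by
  classical
  induction s using Finset.induction_on with
  | empty => simp [Real.zero_rpow (ne_of_gt hα)]
  | insert i s' hi ih =>
    rw [Finset.sum_insert hi, Finset.sum_insert hi]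
    have hsum : 0 ≤ ∑ j ∈ s', f j := Finset.sum_nonneg fun j _ => hf j
    have hpair : (f i + ∑ j ∈ s', f j) ^ α ≤ f i ^ α + (∑ j ∈ s', f j) ^ α := by
      have h := NNReal.rpow_add_le_add_rpow (Real.toNNReal (f i))
        (Real.toNNReal (∑ j ∈ s', f j)) hα.le hα1
      have h2 := NNReal.coe_le_coe.2 h
      push_cast [NNReal.coe_rpow, Real.coe_toNNReal _ (hf i), Real.coe_toNNReal _ hsum,
        Real.coe_toNNReal _ (add_nonneg (hf i) hsum)] at h2
      exact h2
    exact hpair.trans (add_le_add_right ih _)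

/-- induction lemma over subsets. -/
private lemma keyInd (hα : 0 < α) {k : ℕ} (z : Fin k → ℂ) (h : Fin k → Fin k → ℝ)
    (hnn : ∀ j j', 0 ≤ h j j')
    (hkey : ∀ (s : Finset (Fin k)) (i : Fin k), i ∉ s →
      ‖∑ j ∈ s, z j‖ * ‖z i‖ ^ α + ‖z i‖ * ‖∑ j ∈ s, z j‖ ^ α ≤ ∑ j ∈ s, (h j i + h i j)) :
    ∀ s : Finset (Fin k), ‖Fp α (∑ j ∈ s, z j) - ∑ j ∈ s, Fp α (z j)‖ ≤
      C2 α * ∑ j ∈ s, ∑ j' ∈ s, (if j = j' then 0 else h j j') := by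
  classical
  intro s
  induction s using Finset.induction_on with
  | empty => simp [Fp_zero hα]
  | insert i s' hi ih =>
    have hiz : ∀ j ∈ s', (if i = j then (0:ℝ) else h i j) = h i j := by
      intro j hj
      exact if_neg (by rintro rfl; exact hi hj)
    have hzi : ∀ j ∈ s', (if j = i then (0:ℝ) else h j i) = h j i := by
      intro j hj
      exact if_neg (by rintro rfl; exact hi hj)
    -- expand the RHS double sum
    have hRHS : ∑ j ∈ insert i s', ∑ j' ∈ insert i s', (if j = j' then (0:ℝ) else h j j')
        = (∑ j ∈ s', (h j i + h i j))
          + ∑ j ∈ s', ∑ j' ∈ s', (if j = j' then (0:ℝ) else h j j') := by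
      rw [Finset.sum_insert hi]
      rw [Finset.sum_insert hi, if_pos rfl]
      have e1 : ∑ j' ∈ s', (if i = j' then (0:ℝ) else h i j') = ∑ j' ∈ s', h i j' :=
        Finset.sum_congr rfl hiz
      have e2 : ∀ j ∈ s', ∑ j' ∈ insert i s', (if j = j' then (0:ℝ) else h j j')
          = h j i + ∑ j' ∈ s', (if j = j' then (0:ℝ) else h j j') := by
        intro j hj
        rw [Finset.sum_insert hi, if_neg (by rintro rfl; exact hi hj)]
      rw [e1, Finset.sum_congr rfl e2, Finset.sum_add_distrib, Finset.sum_add_distrib]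
      ring
    -- expand the LHS
    rw [Finset.sum_insert hi, Finset.sum_insert hi, hRHS]
    set S := ∑ j ∈ s', z j with hS
    have hid : Fp α (z i + S) - (Fp α (z i) + ∑ j ∈ s', Fp α (z j))
        = (Fp α (S + z i) - Fp α S - Fp α (z i)) + (Fp α S - ∑ j ∈ s', Fp α (z j)) := by
      rw [add_comm S (z i)]; ring
    rw [hid]
    have hC2 := (C2_pos hα).le
    calc ‖(Fp α (S + z i) - Fp α S - Fp α (z i)) + (Fp α S - ∑ j ∈ s', Fp α (z j))‖
        ≤ ‖Fp α (S + z i) - Fp α S - Fp α (z i)‖ + ‖Fp α S - ∑ j ∈ s', Fp α (z j)‖ :=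
          norm_add_le _ _
      _ ≤ C2 α * (‖S‖ * ‖z i‖ ^ α + ‖z i‖ * ‖S‖ ^ α)
          + C2 α * ∑ j ∈ s', ∑ j' ∈ s', (if j = j' then 0 else h j j') :=
          add_le_add (Fp_cancel hα S (z i)) ih
      _ ≤ C2 α * (∑ j ∈ s', (h j i + h i j))
          + C2 α * ∑ j ∈ s', ∑ j' ∈ s', (if j = j' then 0 else h j j') := by
          have := hkey s' i hi
          have h2 := mul_le_mul_of_nonneg_left this hC2
          linarith
      _ = C2 α * ((∑ j ∈ s', (h j i + h i j))
          + ∑ j ∈ s', ∑ j' ∈ s', (if j = j' then 0 else h j j')) := by ring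

end AuxStmt0c

/-- elementary inequality for differences of power nonlinearities
    (case s = 0, no derivatives). -/
theorem stmt_0 (k : ℕ) (α : ℝ) (hα : 0 < α) :
    ∃ C : ℝ, 0 < C ∧ ∀ z : Fin k → ℂ,
      (α ≤ 1 →
        ‖((‖∑ j, z j‖ ^ α : ℝ) : ℂ) * (∑ j, z j) - ∑ j, ((‖z j‖ ^ α : ℝ) : ℂ) * z j‖ ≤
          C * ∑ j, ∑ j', if j = j' then 0 else ‖z j‖ * ‖z j'‖ ^ α) ∧
      (1 < α →
        ‖((‖∑ j, z j‖ ^ α : ℝ) : ℂ) * (∑ j, z j) - ∑ j, ((‖z j‖ ^ α : ℝ) : ℂ) * z j‖ ≤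
          C * ∑ j, ∑ j', if j = j' then 0 else
            ‖z j‖ * ‖z j'‖ * (‖z j‖ + ‖z j'‖) ^ (α - 1)) := by
  classical
  have hC2 := C2_pos hα
  have hQ : (0:ℝ) ≤ (k:ℝ) ^ 2 * (k:ℝ) ^ (α - 1) := by positivity
  refine ⟨C2 α * ((k:ℝ) ^ 2 * (k:ℝ) ^ (α - 1) + 1), by nlinarith, fun z => ⟨?_, ?_⟩⟩
  · -- case α ≤ 1
    intro hα1
    have hnn : ∀ j j' : Fin k, 0 ≤ ‖z j‖ * ‖z j'‖ ^ α := fun j j' => by positivity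
    have hkey : ∀ (s : Finset (Fin k)) (i : Fin k), i ∉ s →
        ‖∑ j ∈ s, z j‖ * ‖z i‖ ^ α + ‖z i‖ * ‖∑ j ∈ s, z j‖ ^ α ≤
          ∑ j ∈ s, (‖z j‖ * ‖z i‖ ^ α + ‖z i‖ * ‖z j‖ ^ α) := by
      intro s i _
      have hA : ‖∑ j ∈ s, z j‖ * ‖z i‖ ^ α ≤ ∑ j ∈ s, ‖z j‖ * ‖z i‖ ^ α := by
        rw [← Finset.sum_mul]
        exact mul_le_mul_of_nonneg_right (norm_sum_le s z)
          (Real.rpow_nonneg (norm_nonneg _) α)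
      have hB : ‖z i‖ * ‖∑ j ∈ s, z j‖ ^ α ≤ ∑ j ∈ s, ‖z i‖ * ‖z j‖ ^ α := by
        rw [← Finset.mul_sum]
        refine mul_le_mul_of_nonneg_left ?_ (norm_nonneg _)
        calc ‖∑ j ∈ s, z j‖ ^ α ≤ (∑ j ∈ s, ‖z j‖) ^ α :=
              Real.rpow_le_rpow (norm_nonneg _) (norm_sum_le s z) hα.le
          _ ≤ ∑ j ∈ s, ‖z j‖ ^ α := rpow_sum_le hα hα1 s _ fun j => norm_nonneg _
      rw [Finset.sum_add_distrib]
      exact add_le_add hA hB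
    have H : ‖Fp α (∑ j, z j) - ∑ j, Fp α (z j)‖ ≤
        C2 α * ∑ j, ∑ j', (if j = j' then 0 else ‖z j‖ * ‖z j'‖ ^ α) :=
      keyInd hα z (fun j j' => ‖z j‖ * ‖z j'‖ ^ α) hnn hkey Finset.univ
    have htS : (0:ℝ) ≤ ∑ j, ∑ j', (if j = j' then 0 else ‖z j‖ * ‖z j'‖ ^ α) := by
      refine Finset.sum_nonneg fun j _ => Finset.sum_nonneg fun j' _ => ?_
      by_cases hjj : j = j'
      · simp [hjj]
      · simp only [if_neg hjj]; positivity
    refine H.trans ?_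
    have : C2 α ≤ C2 α * ((k:ℝ) ^ 2 * (k:ℝ) ^ (α - 1) + 1) := by nlinarith
    exact mul_le_mul_of_nonneg_right this htS
  · -- case 1 < α
    intro hα1
    have hα1' : (0:ℝ) ≤ α - 1 := by linarith
    rcases Nat.eq_zero_or_pos k with hk | hk
    · subst hk
      simp
    · set T := ∑ j, ‖z j‖ with hTdef
      have hT0 : 0 ≤ T := Finset.sum_nonneg fun j _ => norm_nonneg _
      have hnn : ∀ j j' : Fin k, 0 ≤ ‖z j‖ * ‖z j'‖ * T ^ (α - 1) := fun j j' => by positivity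
      have hkey : ∀ (s : Finset (Fin k)) (i : Fin k), i ∉ s →
          ‖∑ j ∈ s, z j‖ * ‖z i‖ ^ α + ‖z i‖ * ‖∑ j ∈ s, z j‖ ^ α ≤
            ∑ j ∈ s, (‖z j‖ * ‖z i‖ * T ^ (α - 1) + ‖z i‖ * ‖z j‖ * T ^ (α - 1)) := by
        intro s i _
        set M := ∑ j ∈ s, ‖z j‖ with hMdef
        have hM0 : 0 ≤ M := Finset.sum_nonneg fun j _ => norm_nonneg _
        have hMT : M ≤ T :=
          Finset.sum_le_sum_of_subset_of_nonneg (Finset.subset_univ s)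
            fun j _ _ => norm_nonneg _
        have hSM : ‖∑ j ∈ s, z j‖ ≤ M := norm_sum_le s z
        have hiT : ‖z i‖ ≤ T :=
          Finset.single_le_sum (fun j _ => norm_nonneg (z j)) (Finset.mem_univ i)
        have hA : ‖∑ j ∈ s, z j‖ * ‖z i‖ ^ α ≤ M * (‖z i‖ * T ^ (α - 1)) := by
          rw [rpow_split hα (norm_nonneg (z i))]
          have h1 : ‖z i‖ ^ (α - 1) ≤ T ^ (α - 1) :=
            Real.rpow_le_rpow (norm_nonneg _) hiT hα1'
          exact mul_le_mul hSM (mul_le_mul_of_nonneg_left h1 (norm_nonneg _))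
            (by positivity) hM0
        have hB : ‖z i‖ * ‖∑ j ∈ s, z j‖ ^ α ≤ ‖z i‖ * (M * T ^ (α - 1)) := by
          refine mul_le_mul_of_nonneg_left ?_ (norm_nonneg _)
          have h2 : ‖∑ j ∈ s, z j‖ ^ α ≤ M ^ α :=
            Real.rpow_le_rpow (norm_nonneg _) hSM hα.le
          have h3 : M ^ α = M * M ^ (α - 1) := rpow_split hα hM0
          have h4 : M ^ (α - 1) ≤ T ^ (α - 1) := Real.rpow_le_rpow hM0 hMT hα1'
          calc ‖∑ j ∈ s, z j‖ ^ α ≤ M ^ α := h2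
            _ = M * M ^ (α - 1) := h3
            _ ≤ M * T ^ (α - 1) := mul_le_mul_of_nonneg_left h4 hM0
        have hsum_eq : ∑ j ∈ s, (‖z j‖ * ‖z i‖ * T ^ (α - 1) + ‖z i‖ * ‖z j‖ * T ^ (α - 1))
            = M * (2 * ‖z i‖ * T ^ (α - 1)) := by
          rw [hMdef, Finset.sum_mul]
          exact Finset.sum_congr rfl fun j _ => by ring
        rw [hsum_eq]
        nlinarith [hA, hB]
      have H : ‖Fp α (∑ j, z j) - ∑ j, Fp α (z j)‖ ≤
          C2 α * ∑ j, ∑ j', (if j = j' then 0 else ‖z j‖ * ‖z j'‖ * T ^ (α - 1)) :=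
        keyInd hα z (fun j j' => ‖z j‖ * ‖z j'‖ * T ^ (α - 1)) hnn hkey Finset.univ
      set tS := ∑ j, ∑ j', (if j = j' then (0:ℝ) else
        ‖z j‖ * ‖z j'‖ * (‖z j‖ + ‖z j'‖) ^ (α - 1)) with htSdef
      have htS : (0:ℝ) ≤ tS := by
        refine Finset.sum_nonneg fun j _ => Finset.sum_nonneg fun j' _ => ?_
        by_cases hjj : j = j'
        · simp [hjj]
        · simp only [if_neg hjj]; positivity
      have pairLB : ∀ p q : Fin k, p ≠ q →
          ‖z p‖ * ‖z q‖ * (‖z p‖ + ‖z q‖) ^ (α - 1) ≤ tS := by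
        intro p q hpq
        have hinner : ∀ j : Fin k, (0:ℝ) ≤ ∑ j' , (if j = j' then (0:ℝ) else
            ‖z j‖ * ‖z j'‖ * (‖z j‖ + ‖z j'‖) ^ (α - 1)) := by
          intro j
          refine Finset.sum_nonneg fun j' _ => ?_
          by_cases hjj : j = j'
          · simp [hjj]
          · simp only [if_neg hjj]; positivity
        have h1 : (if p = q then (0:ℝ) else ‖z p‖ * ‖z q‖ * (‖z p‖ + ‖z q‖) ^ (α - 1))
            ≤ ∑ j', (if p = j' then (0:ℝ) else ‖z p‖ * ‖z j'‖ * (‖z p‖ + ‖z j'‖) ^ (α - 1)) := by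
          refine Finset.single_le_sum
            (f := fun j' => if p = j' then (0:ℝ) else
              ‖z p‖ * ‖z j'‖ * (‖z p‖ + ‖z j'‖) ^ (α - 1))
            (fun j' _ => ?_) (Finset.mem_univ q)
          by_cases hjj : p = j'
          · simp [hjj]
          · simp only [if_neg hjj]; positivity
        have h2 : ∑ j', (if p = j' then (0:ℝ) else
            ‖z p‖ * ‖z j'‖ * (‖z p‖ + ‖z j'‖) ^ (α - 1)) ≤ tS :=
          Finset.single_le_sum (fun j _ => hinner j) (Finset.mem_univ p)
        rw [if_neg hpq] at h1
        exact h1.trans h2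
      obtain ⟨m, -, hm⟩ := Finset.exists_max_image Finset.univ (fun j => ‖z j‖)
        ⟨⟨0, hk⟩, Finset.mem_univ _⟩
      have hTk : T ≤ (k:ℝ) * ‖z m‖ := by
        calc T ≤ ∑ _j : Fin k, ‖z m‖ :=
              Finset.sum_le_sum fun j _ => hm j (Finset.mem_univ j)
          _ = (k:ℝ) * ‖z m‖ := by
              simp [Finset.sum_const, Finset.card_univ, nsmul_eq_mul]
      have hTp : T ^ (α - 1) ≤ (k:ℝ) ^ (α - 1) * ‖z m‖ ^ (α - 1) := by
        calc T ^ (α - 1) ≤ ((k:ℝ) * ‖z m‖) ^ (α - 1) := Real.rpow_le_rpow hT0 hTk hα1'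
          _ = (k:ℝ) ^ (α - 1) * ‖z m‖ ^ (α - 1) :=
              Real.mul_rpow (Nat.cast_nonneg k) (norm_nonneg _)
      have perterm : ∀ j j' : Fin k, j ≠ j' →
          ‖z j‖ * ‖z j'‖ * ‖z m‖ ^ (α - 1) ≤ tS := by
        intro j j' hjj
        by_cases hmj : m = j
        · subst hmj
          have hbase : ‖z m‖ ≤ ‖z j'‖ + ‖z m‖ := le_add_of_nonneg_left (norm_nonneg _)
          have h5 : ‖z m‖ ^ (α - 1) ≤ (‖z j'‖ + ‖z m‖) ^ (α - 1) :=
            Real.rpow_le_rpow (norm_nonneg _) hbase hα1'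
          have h6 : ‖z m‖ * ‖z j'‖ * ‖z m‖ ^ (α - 1)
              ≤ ‖z j'‖ * ‖z m‖ * (‖z j'‖ + ‖z m‖) ^ (α - 1) := by
            calc ‖z m‖ * ‖z j'‖ * ‖z m‖ ^ (α - 1)
                = (‖z m‖ * ‖z j'‖) * ‖z m‖ ^ (α - 1) := by ring
              _ ≤ (‖z m‖ * ‖z j'‖) * (‖z j'‖ + ‖z m‖) ^ (α - 1) :=
                  mul_le_mul_of_nonneg_left h5 (by positivity)
              _ = ‖z j'‖ * ‖z m‖ * (‖z j'‖ + ‖z m‖) ^ (α - 1) := by ring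
          exact h6.trans (pairLB j' m (Ne.symm hjj))
        · have hj'm : ‖z j'‖ ≤ ‖z m‖ := hm j' (Finset.mem_univ _)
          have hbase : ‖z m‖ ≤ ‖z j‖ + ‖z m‖ := le_add_of_nonneg_left (norm_nonneg _)
          have h5 : ‖z m‖ ^ (α - 1) ≤ (‖z j‖ + ‖z m‖) ^ (α - 1) :=
            Real.rpow_le_rpow (norm_nonneg _) hbase hα1'
          have h6 : ‖z j‖ * ‖z j'‖ * ‖z m‖ ^ (α - 1)
              ≤ ‖z j‖ * ‖z m‖ * (‖z j‖ + ‖z m‖) ^ (α - 1) := by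
            calc ‖z j‖ * ‖z j'‖ * ‖z m‖ ^ (α - 1)
                = ‖z j'‖ * (‖z j‖ * ‖z m‖ ^ (α - 1)) := by ring
              _ ≤ ‖z m‖ * (‖z j‖ * ‖z m‖ ^ (α - 1)) :=
                  mul_le_mul_of_nonneg_right hj'm (by positivity)
              _ = (‖z j‖ * ‖z m‖) * ‖z m‖ ^ (α - 1) := by ring
              _ ≤ (‖z j‖ * ‖z m‖) * (‖z j‖ + ‖z m‖) ^ (α - 1) :=
                  mul_le_mul_of_nonneg_left h5 (by positivity)
              _ = ‖z j‖ * ‖z m‖ * (‖z j‖ + ‖z m‖) ^ (α - 1) := by ring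
          exact h6.trans (pairLB j m fun e => hmj e.symm)
      have hkpnn : (0:ℝ) ≤ (k:ℝ) ^ (α - 1) := Real.rpow_nonneg (Nat.cast_nonneg k) _
      have Dbound : ∀ j j' : Fin k,
          (if j = j' then (0:ℝ) else ‖z j‖ * ‖z j'‖ * T ^ (α - 1))
            ≤ (k:ℝ) ^ (α - 1) * tS := by
        intro j j'
        by_cases hjj : j = j'
        · simp only [if_pos hjj]
          positivity
        · simp only [if_neg hjj]
          calc ‖z j‖ * ‖z j'‖ * T ^ (α - 1)
              ≤ ‖z j‖ * ‖z j'‖ * ((k:ℝ) ^ (α - 1) * ‖z m‖ ^ (α - 1)) :=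
                mul_le_mul_of_nonneg_left hTp (by positivity)
            _ = (k:ℝ) ^ (α - 1) * (‖z j‖ * ‖z j'‖ * ‖z m‖ ^ (α - 1)) := by ring
            _ ≤ (k:ℝ) ^ (α - 1) * tS :=
                mul_le_mul_of_nonneg_left (perterm j j' hjj) hkpnn
      have hsum : ∑ j, ∑ j', (if j = j' then (0:ℝ) else ‖z j‖ * ‖z j'‖ * T ^ (α - 1))
          ≤ (k:ℝ) ^ 2 * ((k:ℝ) ^ (α - 1) * tS) := by
        calc ∑ j, ∑ j', (if j = j' then (0:ℝ) else ‖z j‖ * ‖z j'‖ * T ^ (α - 1))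
            ≤ ∑ _j : Fin k, ∑ _j' : Fin k, (k:ℝ) ^ (α - 1) * tS :=
              Finset.sum_le_sum fun j _ => Finset.sum_le_sum fun j' _ => Dbound j j'
          _ = (k:ℝ) ^ 2 * ((k:ℝ) ^ (α - 1) * tS) := by
              simp [Finset.sum_const, Finset.card_univ, nsmul_eq_mul]
              ring
      refine H.trans ?_
      calc C2 α * ∑ j, ∑ j', (if j = j' then (0:ℝ) else ‖z j‖ * ‖z j'‖ * T ^ (α - 1))
          ≤ C2 α * ((k:ℝ) ^ 2 * ((k:ℝ) ^ (α - 1) * tS)) :=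
            mul_le_mul_of_nonneg_left hsum hC2.le
        _ ≤ C2 α * ((k:ℝ) ^ 2 * (k:ℝ) ^ (α - 1) + 1) * tS := by nlinarith
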